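/- Let H₀ be a symmetric n×n real matrix, let d⁰,…,d^{k−1}, y⁰,…,y^{k−1} ∈ ℝⁿ, and let γ₀,…,γ_{k−1} > 0. Define H_{j+1} := γ_j [ H_j + ((y^j − γ_j H_j d^j)(y^j − γ_j H_j d^j)ᵀ) / (γ_j ⟨y^j − γ_j H_j d^j, d^j⟩) ] for j = 0,…,k−1, and assume each update is well defined, i.e. ⟨y^j − γ_j H_j d^j, d^j⟩ ≠ 0 for all j < k. Set γ̄_j := ∏_{i<j} γ_i, q^j := y^j − γ̄_{j+1} H₀ d^j, let Q_j be the n×j matrix with columns q⁰,…,q^{j−1}, and define M₁ := (⟨q⁰, d⁰⟩) (a 1×1 matrix) and M_{j+1} := [[γ_j⁻¹ M_j, Q_jᵀ d^j], [(Q_jᵀ d^j)ᵀ, ⟨q^j, d^j⟩]] for 1 ≤ j ≤ k−1. Then M_k is invertible and H_k = γ̄_k H₀ + Q_k M_k⁻¹ Q_kᵀ. -/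

import Mathlib

/-!
By induction on `j`, `H_j = γ̄_j H₀ + Q_j M_j⁻¹ Q_jᵀ` with `M_j` symmetric. With `A = γ_j⁻¹ M_j`,
the residual `w = y^j - γ_j H_j d^j` equals `q^j - Q_j A⁻¹ Q_jᵀ d^j`, and `⟨w, d^j⟩` is the Schur
complement of `A` in the bordered matrix `M_{j+1}`. The block-inverse formula then gives
`Q_{j+1} M_{j+1}⁻¹ Q_{j+1}ᵀ = Q_j A⁻¹ Q_jᵀ + ⟨w, d^j⟩⁻¹ w wᵀ`, which is the rank-one update.
The induction starts at `j = 0`, where `Q_0` and `M_0` are empty and `M_1` is a bordering of `M_0`.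
-/

open Matrix

namespace Matrix

def bordered {α m : Type*} (A : Matrix m m α) (b : m → α) (c : α) :
    Matrix (m ⊕ Fin 1) (m ⊕ Fin 1) α :=
  fromBlocks A (replicateCol (Fin 1) b) (replicateRow (Fin 1) b) (of fun _ _ => c)

theorem IsSymm.bordered {α m : Type*} {A : Matrix m m α} (hA : A.IsSymm) (b : m → α) (c : α) :
    (A.bordered b c).IsSymm :=
  hA.fromBlocks (transpose_replicateCol b) rfl

variable {K l m n : Type*} [Field K] [Fintype m] [Fintype n] [DecidableEq m] [DecidableEq n]

theorem isUnit_fromBlocks_of_isUnit_schur {A : Matrix m m K} {B : Matrix m n K}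
    {C : Matrix n m K} {D : Matrix n n K} (hA : IsUnit A) (hS : IsUnit (D - C * A⁻¹ * B)) :
    IsUnit (fromBlocks A B C D) := by
  obtain ⟨_⟩ := hA.nonempty_invertible
  rw [← invOf_eq_nonsing_inv A] at hS
  exact isUnit_fromBlocks_iff_of_invertible₁₁.mpr hS

theorem fromCols_mul_inv_fromBlocks_mul_fromRows {A : Matrix m m K} {B : Matrix m n K}
    {C : Matrix n m K} {D : Matrix n n K} (hA : IsUnit A) (hS : IsUnit (D - C * A⁻¹ * B))
    (P : Matrix l m K) (R : Matrix l n K) (P' : Matrix m l K) (R' : Matrix n l K) :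
    fromCols P R * (fromBlocks A B C D)⁻¹ * fromRows P' R' =
      P * A⁻¹ * P' + (R - P * A⁻¹ * B) * (D - C * A⁻¹ * B)⁻¹ * (R' - C * A⁻¹ * P') := by
  obtain ⟨_⟩ := hA.nonempty_invertible
  rw [← invOf_eq_nonsing_inv A] at hS ⊢
  obtain ⟨_⟩ := hS.nonempty_invertible
  let := fromBlocks₁₁Invertible A B C D
  rw [← invOf_eq_nonsing_inv (fromBlocks A B C D), invOf_fromBlocks₁₁_eq,
    ← invOf_eq_nonsing_inv (D - C * ⅟A * B), fromCols_mul_fromBlocks, fromCols_mul_fromRows]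
  simp only [Matrix.mul_add, Matrix.add_mul, Matrix.mul_sub, Matrix.sub_mul, Matrix.mul_neg,
    Matrix.neg_mul, Matrix.mul_assoc]
  abel

theorem inv_of_fun_const_fin_one (s : K) :
    (of fun _ _ => s : Matrix (Fin 1) (Fin 1) K)⁻¹ = of fun _ _ => s⁻¹ := by
  ext i j
  simp [Subsingleton.elim i j]

theorem of_sub_replicateRow_mul_mul_replicateCol (A : Matrix m m K) (b : m → K) (c : K) :
    (of fun _ _ => c : Matrix (Fin 1) (Fin 1) K) -
        replicateRow (Fin 1) b * A⁻¹ * replicateCol (Fin 1) b =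
      of fun _ _ => c - b ⬝ᵥ (A⁻¹ *ᵥ b) := by
  rw [Matrix.mul_assoc, ← replicateCol_mulVec, replicateRow_mul_replicateCol]
  rfl

theorem isUnit_of_sub_replicateRow_mul_mul_replicateCol {A : Matrix m m K} {b : m → K} {c : K}
    (hs : c - b ⬝ᵥ (A⁻¹ *ᵥ b) ≠ 0) :
    IsUnit ((of fun _ _ => c : Matrix (Fin 1) (Fin 1) K) -
      replicateRow (Fin 1) b * A⁻¹ * replicateCol (Fin 1) b) := by
  rw [of_sub_replicateRow_mul_mul_replicateCol, isUnit_iff_isUnit_det, det_unique]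
  exact hs.isUnit

theorem isUnit_bordered {A : Matrix m m K} (hA : IsUnit A) {b : m → K} {c : K}
    (hs : c - b ⬝ᵥ (A⁻¹ *ᵥ b) ≠ 0) : IsUnit (A.bordered b c) :=
  isUnit_fromBlocks_of_isUnit_schur hA (isUnit_of_sub_replicateRow_mul_mul_replicateCol hs)

theorem fromCols_mul_inv_bordered_mul_transpose {A : Matrix m m K} (hA : IsUnit A)
    (hAs : A.IsSymm) {b : m → K} {c : K} (hs : c - b ⬝ᵥ (A⁻¹ *ᵥ b) ≠ 0)
    (P : Matrix l m K) (r : l → K) :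
    fromCols P (replicateCol (Fin 1) r) * (A.bordered b c)⁻¹ *
        (fromCols P (replicateCol (Fin 1) r))ᵀ =
      P * A⁻¹ * Pᵀ + (c - b ⬝ᵥ (A⁻¹ *ᵥ b))⁻¹ •
        vecMulVec (r - P *ᵥ (A⁻¹ *ᵥ b)) (r - P *ᵥ (A⁻¹ *ᵥ b)) := by
  set w := r - P *ᵥ (A⁻¹ *ᵥ b)
  have hcol : replicateCol (Fin 1) r - P * A⁻¹ * replicateCol (Fin 1) b =
      replicateCol (Fin 1) w := by
    ext i j
    simp [w, ← replicateCol_mulVec]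
  have hrow : replicateRow (Fin 1) r - replicateRow (Fin 1) b * A⁻¹ * Pᵀ =
      replicateRow (Fin 1) w := by
    rw [← transpose_replicateCol (ι := Fin 1) w, ← hcol, transpose_sub, transpose_replicateCol,
      transpose_mul, transpose_mul, hAs.inv.eq, transpose_replicateCol, Matrix.mul_assoc]
  have hS := isUnit_of_sub_replicateRow_mul_mul_replicateCol (A := A) hs
  rw [transpose_fromCols, transpose_replicateCol, bordered,
    fromCols_mul_inv_fromBlocks_mul_fromRows hA hS, of_sub_replicateRow_mul_mul_replicateCol,
    inv_of_fun_const_fin_one, hcol, hrow]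
  congr 1
  ext i j
  simp only [mul_apply, Finset.univ_unique, Finset.sum_singleton, replicateCol_apply,
    replicateRow_apply, of_apply, smul_apply, vecMulVec_apply, smul_eq_mul]
  ring

theorem submatrix_mul_inv_reindex_mul_transpose {m' : Type*} [Fintype m'] [DecidableEq m']
    (e : m ≃ m') (F : Matrix l m K) (B : Matrix m m K) :
    F.submatrix id e.symm * (reindex e e B)⁻¹ * (F.submatrix id e.symm)ᵀ = F * B⁻¹ * Fᵀ := by
  rw [inv_reindex, reindex_apply, transpose_submatrix, submatrix_mul_equiv,
    submatrix_mul_equiv, submatrix_id_id]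

theorem reindex_bordered_fin_zero {α : Type*} (A : Matrix (Fin 0) (Fin 0) α) (b : Fin 0 → α)
    (c : α) :
    reindex finSumFinEquiv finSumFinEquiv (A.bordered b c) = of fun _ _ => c := by
  ext i j
  fin_cases i; fin_cases j
  rfl

theorem of_fin_succ_eq_submatrix_fromCols {ι K : Type*} (v : ℕ → ι → K) (j : ℕ) :
    (of fun i (l : Fin (j + 1)) => v l i) =
      (fromCols (of fun i (l : Fin j) => v l i) (replicateCol (Fin 1) (v j))).submatrix id
        finSumFinEquiv.symm := by
  ext i l
  induction l using Fin.lastCases with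
  | last => simp [finSumFinEquiv_symm_last]
  | cast l => simp [finSumFinEquiv_symm_apply_castSucc]

end Matrix

section Kleinmichel

variable {K ι m : Type*} [Field K] [Fintype ι] [Fintype m] [DecidableEq m]

def kleinmichelUpdate (H : Matrix ι ι K) (γ : K) (d y : ι → K) : Matrix ι ι K :=
  γ • (H + (γ * ((y - γ • (H *ᵥ d)) ⬝ᵥ d))⁻¹ •
    vecMulVec (y - γ • (H *ᵥ d)) (y - γ • (H *ᵥ d)))

theorem kleinmichelUpdate_add_mul_inv_mul_transpose {G : Matrix ι ι K} {Q : Matrix ι m K}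
    {M : Matrix m m K} (hM : M.IsSymm) (hMu : IsUnit M) {γ : K} (hγ : γ ≠ 0) {d y q : ι → K}
    (hq : q = y - γ • (G *ᵥ d)) (hδ : (y - γ • ((G + Q * M⁻¹ * Qᵀ) *ᵥ d)) ⬝ᵥ d ≠ 0) :
    IsUnit ((γ⁻¹ • M).bordered (Qᵀ *ᵥ d) (q ⬝ᵥ d)) ∧
      kleinmichelUpdate (G + Q * M⁻¹ * Qᵀ) γ d y = γ • G + fromCols Q (replicateCol (Fin 1) q) *
        ((γ⁻¹ • M).bordered (Qᵀ *ᵥ d) (q ⬝ᵥ d))⁻¹ * (fromCols Q (replicateCol (Fin 1) q))ᵀ := by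
  have hinv : (γ⁻¹ • M)⁻¹ = γ • M⁻¹ := by
    refine inv_eq_left_inv ?_
    rw [smul_mul_smul, mul_inv_cancel₀ hγ, one_smul,
      nonsing_inv_mul _ ((isUnit_iff_isUnit_det _).mp hMu)]
  set H := G + Q * M⁻¹ * Qᵀ
  have hw : q - Q *ᵥ ((γ⁻¹ • M)⁻¹ *ᵥ (Qᵀ *ᵥ d)) = y - γ • (H *ᵥ d) := by
    rw [hq, hinv, smul_mulVec, mulVec_smul, mulVec_mulVec, mulVec_mulVec, add_mulVec,
      smul_add, sub_sub]
  have hs : q ⬝ᵥ d - Qᵀ *ᵥ d ⬝ᵥ ((γ⁻¹ • M)⁻¹ *ᵥ (Qᵀ *ᵥ d)) = (y - γ • (H *ᵥ d)) ⬝ᵥ d := by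
    rw [← hw, sub_dotProduct, mulVec_transpose, ← dotProduct_mulVec, dotProduct_comm d]
  have hA : IsUnit (γ⁻¹ • M) := hMu.smul (Units.mk0 γ⁻¹ (inv_ne_zero hγ))
  rw [← hs] at hδ
  refine ⟨isUnit_bordered hA hδ, ?_⟩
  rw [fromCols_mul_inv_bordered_mul_transpose hA (hM.smul _) hδ, hw, hs, hinv, kleinmichelUpdate,
    smul_add, smul_add, smul_smul, mul_inv, ← mul_assoc, mul_inv_cancel₀ hγ, one_mul]
  simp only [H, Matrix.mul_smul, Matrix.smul_mul]
  abel

theorem kleinmichel_invariant_succ {m' : Type*} [Fintype m'] [DecidableEq m']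
    {G : Matrix ι ι K} {Q : Matrix ι m K} {M : Matrix m m K} (hM : M.IsSymm) (hMu : IsUnit M)
    {γ : K} (hγ : γ ≠ 0) {d y q : ι → K} (hq : q = y - γ • (G *ᵥ d))
    (hδ : (y - γ • ((G + Q * M⁻¹ * Qᵀ) *ᵥ d)) ⬝ᵥ d ≠ 0) {e : m ⊕ Fin 1 ≃ m'}
    {M' : Matrix m' m' K} (hM' : M' = reindex e e ((γ⁻¹ • M).bordered (Qᵀ *ᵥ d) (q ⬝ᵥ d)))
    {Q' : Matrix ι m' K} (hQ' : Q' = (fromCols Q (replicateCol (Fin 1) q)).submatrix id e.symm) :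
    M'.IsSymm ∧ IsUnit M' ∧
      kleinmichelUpdate (G + Q * M⁻¹ * Qᵀ) γ d y = γ • G + Q' * M'⁻¹ * Q'ᵀ := by
  obtain ⟨hunit, hupdate⟩ := kleinmichelUpdate_add_mul_inv_mul_transpose hM hMu hγ hq hδ
  subst hM' hQ'
  refine ⟨((hM.smul _).bordered _ _).reindex e, ?_, ?_⟩
  · rwa [reindex_apply, isUnit_submatrix_equiv]
  · rw [hupdate, submatrix_mul_inv_reindex_mul_transpose]

end Kleinmichel

theorem stmt15_general {n : ℕ} (k : ℕ)
    (H₀ : Matrix (Fin n) (Fin n) ℝ)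
    (d y : ℕ → Fin n → ℝ) (γ : ℕ → ℝ) (hγ : ∀ j < k, 0 < γ j)
    (H : ℕ → Matrix (Fin n) (Fin n) ℝ) (hH0 : H 0 = H₀)
    (hwd : ∀ j < k, (y j - γ j • (H j *ᵥ d j)) ⬝ᵥ d j ≠ 0)
    (hHrec : ∀ j < k, H (j + 1) =
      γ j • (H j + (γ j * ((y j - γ j • (H j *ᵥ d j)) ⬝ᵥ d j))⁻¹ •
        vecMulVec (y j - γ j • (H j *ᵥ d j)) (y j - γ j • (H j *ᵥ d j))))
    (γb : ℕ → ℝ) (hγb : ∀ j, γb j = ∏ i ∈ Finset.range j, γ i)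
    (qv : ℕ → Fin n → ℝ) (hqv : ∀ j, qv j = y j - γb (j + 1) • (H₀ *ᵥ d j))
    (Qmat : (j : ℕ) → Matrix (Fin n) (Fin j) ℝ)
    (hQ : ∀ j, Qmat j = of fun i (l : Fin j) => qv l.1 i)
    (M : (j : ℕ) → Matrix (Fin j) (Fin j) ℝ)
    (hM1 : M 1 = of fun _ _ => qv 0 ⬝ᵥ d 0)
    (hMrec : ∀ j, 1 ≤ j → j + 1 ≤ k → M (j + 1) =
      (reindex finSumFinEquiv finSumFinEquiv)
        (fromBlocks ((γ j)⁻¹ • M j)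
          (replicateCol (Fin 1) ((Qmat j)ᵀ *ᵥ d j))
          (replicateRow (Fin 1) ((Qmat j)ᵀ *ᵥ d j))
          (of fun _ _ => qv j ⬝ᵥ d j))) :
    IsUnit (M k) ∧ H k = γb k • H₀ + Qmat k * (M k)⁻¹ * (Qmat k)ᵀ := by
  have hM : ∀ j < k, M (j + 1) = reindex finSumFinEquiv finSumFinEquiv
      (((γ j)⁻¹ • M j).bordered ((Qmat j)ᵀ *ᵥ d j) (qv j ⬝ᵥ d j)) := by
    rintro (_ | j) hj
    · rw [reindex_bordered_fin_zero, hM1]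
    · exact hMrec (j + 1) j.succ_pos hj
  have hQs : ∀ j, Qmat (j + 1) =
      (fromCols (Qmat j) (replicateCol (Fin 1) (qv j))).submatrix id finSumFinEquiv.symm :=
    fun j => by rw [hQ, hQ, of_fin_succ_eq_submatrix_fromCols]
  suffices ∀ j ≤ k, (M j).IsSymm ∧ IsUnit (M j) ∧
      H j = γb j • H₀ + Qmat j * (M j)⁻¹ * (Qmat j)ᵀ from (this k le_rfl).2
  intro j
  induction j with
  | zero =>
    exact fun _ => ⟨Subsingleton.elim _ _, isUnit_of_subsingleton _, by ext; simp [hH0, hγb]⟩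
  | succ j ih =>
    intro hj
    obtain ⟨hsymm, hunit, hH⟩ := ih (by omega)
    have hγb' : γb (j + 1) = γ j * γb j := by
      rw [hγb, hγb, Finset.prod_range_succ, mul_comm]
    have hq : qv j = y j - γ j • ((γb j • H₀) *ᵥ d j) := by
      rw [hqv, hγb', smul_mulVec, smul_smul]
    obtain ⟨hsymm', hunit', hupdate⟩ := kleinmichel_invariant_succ hsymm hunit (hγ j hj).ne' hq
      (hH ▸ hwd j hj) (hM j hj) (hQs j)
    refine ⟨hsymm', hunit', ?_⟩
    rw [show H (j + 1) = kleinmichelUpdate (H j) (γ j) (d j) (y j) from hHrec j hj, hH, hupdate,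
      smul_smul, hγb']

theorem stmt15 {n : ℕ} (k : ℕ) (hk : 1 ≤ k)
    (H₀ : Matrix (Fin n) (Fin n) ℝ) (hH₀ : H₀.IsSymm)
    (d y : ℕ → Fin n → ℝ) (γ : ℕ → ℝ) (hγ : ∀ j < k, 0 < γ j)
    (H : ℕ → Matrix (Fin n) (Fin n) ℝ) (hH0 : H 0 = H₀)
    (hwd : ∀ j < k, (y j - γ j • (H j *ᵥ d j)) ⬝ᵥ d j ≠ 0)
    (hHrec : ∀ j < k, H (j + 1) =
      γ j • (H j + (γ j * ((y j - γ j • (H j *ᵥ d j)) ⬝ᵥ d j))⁻¹ •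
        vecMulVec (y j - γ j • (H j *ᵥ d j)) (y j - γ j • (H j *ᵥ d j))))
    (γb : ℕ → ℝ) (hγb : ∀ j, γb j = ∏ i ∈ Finset.range j, γ i)
    (qv : ℕ → Fin n → ℝ) (hqv : ∀ j, qv j = y j - γb (j + 1) • (H₀ *ᵥ d j))
    (Qmat : (j : ℕ) → Matrix (Fin n) (Fin j) ℝ)
    (hQ : ∀ j, Qmat j = of fun i (l : Fin j) => qv l.1 i)
    (M : (j : ℕ) → Matrix (Fin j) (Fin j) ℝ)
    (hM1 : M 1 = of fun _ _ => qv 0 ⬝ᵥ d 0)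
    (hMrec : ∀ j, 1 ≤ j → j + 1 ≤ k → M (j + 1) =
      (reindex finSumFinEquiv finSumFinEquiv)
        (fromBlocks ((γ j)⁻¹ • M j)
          (replicateCol (Fin 1) ((Qmat j)ᵀ *ᵥ d j))
          (replicateRow (Fin 1) ((Qmat j)ᵀ *ᵥ d j))
          (of fun _ _ => qv j ⬝ᵥ d j))) :
    IsUnit (M k) ∧ H k = γb k • H₀ + Qmat k * (M k)⁻¹ * (Qmat k)ᵀ :=
  stmt15_general k H₀ d y γ hγ H hH0 hwd hHrec γb hγb qv hqv Qmat hQ M hM1 hMrec
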